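/- Let S ⊆ ℝⁿ be a compact convex set and g: S → ℝⁿ continuous. Then for every z ∈ S and every w ∈ G(z) (with G as defined via the normal cone and ball intersection), ‖w‖ ≥ ‖[g(z)]_{T_S(z)}‖, i.e., the projected vector field realizes the minimum norm among all elements of G(z). -/

import Mathlib

open scoped RealInnerProductSpace

/-- Tangent cone to a set `S` at `x`: closure of `{h (z - x) : z ∈ S, h > 0}`. -/
def tanCone {n : ℕ} (S : Set (EuclideanSpace ℝ (Fin n))) (x : EuclideanSpace ℝ (Fin n)) :
    Set (EuclideanSpace ℝ (Fin n)) :=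
  closure {y | ∃ z ∈ S, ∃ h : ℝ, 0 < h ∧ y = h • (z - x)}

/-- Normal cone to a set `S` at `x`. -/
def normalCone {n : ℕ} (S : Set (EuclideanSpace ℝ (Fin n))) (x : EuclideanSpace ℝ (Fin n)) :
    Set (EuclideanSpace ℝ (Fin n)) :=
  {v | ∀ w ∈ tanCone S x, ⟪v, w⟫ ≤ 0}

/-- `p` is the Euclidean projection of `v` onto `C`. -/
def IsProjOn {n : ℕ} (C : Set (EuclideanSpace ℝ (Fin n))) (v p : EuclideanSpace ℝ (Fin n)) :
    Prop :=
  p ∈ C ∧ ∀ w ∈ C, ‖p - v‖ ≤ ‖w - v‖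

/-! The projection `p` of `v` onto a cone is also the nearest point to `v` on the ray through
`p`; at `t = 1` the derivative of `t ↦ ‖t • p - v‖²` gives `‖p‖² ≤ ⟪p, v⟫`. Since `⟪u, p⟫ ≤ 0`
for `u` in the normal cone, `‖p‖² ≤ ⟪p, v - u⟫ ≤ ‖p‖ ‖v - u‖` by Cauchy–Schwarz. -/

open scoped Pointwise in
lemma smul_mem_tanCone {n : ℕ} {S : Set (EuclideanSpace ℝ (Fin n))}
    {x y : EuclideanSpace ℝ (Fin n)} {t : ℝ} (ht : 0 < t) (hy : y ∈ tanCone S x) :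
    t • y ∈ tanCone S x := by
  have hscale : t • {y | ∃ z ∈ S, ∃ h : ℝ, 0 < h ∧ y = h • (z - x)} ⊆
      {y | ∃ z ∈ S, ∃ h : ℝ, 0 < h ∧ y = h • (z - x)} := by
    rintro _ ⟨_, ⟨z, hz, h, hh, rfl⟩, rfl⟩
    exact ⟨z, hz, t * h, mul_pos ht hh, (mul_smul t h _).symm⟩
  have hy' : t • y ∈ t • tanCone S x := Set.smul_mem_smul_set hy
  rw [tanCone, ← closure_smul₀] at hy'
  exact closure_mono hscale hy'

section InnerProductSpace

variable {E : Type*} [NormedAddCommGroup E] [InnerProductSpace ℝ E]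

lemma norm_sq_le_inner_of_forall_norm_sub_le {p v : E}
    (hmin : ∀ t ∈ Set.Ioo (0 : ℝ) 1, ‖p - v‖ ≤ ‖t • p - v‖) :
    ‖p‖ ^ 2 ≤ ⟪p, v⟫ := by
  -- `‖t • p - v‖² - ‖p - v‖² = (t - 1) ((t + 1) ‖p‖² - 2 ⟪p, v⟫)`; let `t → 1⁻`.
  have hchord : ∀ t ∈ Set.Ioo (0 : ℝ) 1, (t + 1) * ‖p‖ ^ 2 ≤ 2 * ⟪p, v⟫ := by
    intro t ht
    have hsq : ‖p - v‖ ^ 2 ≤ ‖t • p - v‖ ^ 2 := pow_le_pow_left₀ (norm_nonneg _) (hmin t ht) 2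
    rw [norm_sub_sq_real, norm_sub_sq_real, norm_smul, real_inner_smul_left, Real.norm_eq_abs,
      abs_of_pos ht.1] at hsq
    nlinarith [ht.2]
  have hlim : Filter.Tendsto (fun t : ℝ => (t + 1) * ‖p‖ ^ 2) (nhdsWithin 1 (Set.Iio 1))
      (nhds ((1 + 1) * ‖p‖ ^ 2)) :=
    ((continuous_id.add continuous_const).mul continuous_const).continuousAt.continuousWithinAt
  have hendpoint : (1 + 1) * ‖p‖ ^ 2 ≤ 2 * ⟪p, v⟫ :=
    le_of_tendsto hlim (Filter.mem_of_superset (Ioo_mem_nhdsLT zero_lt_one) hchord)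
  linarith

lemma norm_le_norm_sub_of_inner_nonpos {p v u : E} (hp : ‖p‖ ^ 2 ≤ ⟪p, v⟫)
    (hu : ⟪u, p⟫ ≤ 0) : ‖p‖ ≤ ‖v - u‖ := by
  have hinner : ‖p‖ ^ 2 ≤ ⟪p, v - u⟫ := by
    rw [inner_sub_right, real_inner_comm u p]
    linarith
  nlinarith [real_inner_le_norm p (v - u), norm_nonneg p, norm_nonneg (v - u)]

end InnerProductSpace

lemma IsProjOn.norm_sq_le_inner_tanCone {n : ℕ} {S : Set (EuclideanSpace ℝ (Fin n))}
    {z v p : EuclideanSpace ℝ (Fin n)} (hp : IsProjOn (tanCone S z) v p) :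
    ‖p‖ ^ 2 ≤ ⟪p, v⟫ :=
  norm_sq_le_inner_of_forall_norm_sub_le fun _ ht => hp.2 _ (smul_mem_tanCone ht.1 hp.1)

theorem stmt_14_general {n : ℕ} (S : Set (EuclideanSpace ℝ (Fin n)))
    (g : EuclideanSpace ℝ (Fin n) → EuclideanSpace ℝ (Fin n))
    (z : EuclideanSpace ℝ (Fin n))
    (p : EuclideanSpace ℝ (Fin n)) (hp : IsProjOn (tanCone S z) (g z) p)
    (w : EuclideanSpace ℝ (Fin n))
    (hw₁ : ∃ u ∈ normalCone S z, w = g z - u) :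
    ‖p‖ ≤ ‖w‖ := by
  obtain ⟨u, hu, rfl⟩ := hw₁
  exact norm_le_norm_sub_of_inner_nonpos hp.norm_sq_le_inner_tanCone (hu p hp.1)

/-- The projected vector field has minimum norm among all elements of `G z`. -/
theorem stmt_14 {n : ℕ} (S : Set (EuclideanSpace ℝ (Fin n)))
    (hS : IsCompact S) (hconv : Convex ℝ S)
    (g : EuclideanSpace ℝ (Fin n) → EuclideanSpace ℝ (Fin n)) (hg : ContinuousOn g S)
    (z : EuclideanSpace ℝ (Fin n)) (hz : z ∈ S)
    (p : EuclideanSpace ℝ (Fin n)) (hp : IsProjOn (tanCone S z) (g z) p)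
    (w : EuclideanSpace ℝ (Fin n))
    (hw₁ : ∃ u ∈ normalCone S z, w = g z - u)
    (hw₂ : ‖w - g z‖ ≤ ‖g z - p‖) :
    ‖p‖ ≤ ‖w‖ :=
  stmt_14_general S g z p hp w hw₁
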